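/- arXiv:2509.04103 — 13 statements merged into one kernel-verified Lean document; each statement's English description precedes it below -/
import Mathlib

section
/- Let A be an associative algebra over a field of characteristic zero, let p and q be non-negative integers with p + q ≠ 0, and let d : A → A be a linear map satisfying (p+q)·d(xy) = 2p·d(x)·y + 2q·x·d(y) for all x, y ∈ A. Then for every n ∈ ℕ and all a, b ∈ A, dⁿ(ab) = (2ⁿ/(p+q)ⁿ) · Σ_{k=0}^{n} C(n,k) · p^{n-k} · q^{k} · d^{n-k}(a) · d^{k}(b), where d⁰ is the identity map. -/
/-- Auxiliary: cleared-denominator version of the iterated formula. -/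
theorem pq_derivation_iterate_aux
    {K : Type*} [Field K] [CharZero K]
    {A : Type*} [NonUnitalRing A] [Module K A]
    [SMulCommClass K A A] [IsScalarTower K A A]
    (p q : ℕ)
    (d : A →ₗ[K] A)
    (hd : ∀ x y : A, ((p + q : ℕ) : K) • d (x * y)
        = ((2 * p : ℕ) : K) • (d x * y) + ((2 * q : ℕ) : K) • (x * d y))
    (n : ℕ) (a b : A) :
    ((p + q : ℕ) : K) ^ n • (⇑d)^[n] (a * b)
      = ∑ k ∈ Finset.range (n + 1),
          (((n.choose k * (2*p)^(n-k) * (2*q)^k : ℕ)) : K) •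
            ((⇑d)^[n-k] a * (⇑d)^[k] b) := by
  induction n with
  | zero => simp
  | succ n ih =>
    have step : ((p + q : ℕ) : K) ^ (n+1) • (⇑d)^[n+1] (a * b)
        = ∑ k ∈ Finset.range (n+1),
            (((n.choose k * (2*p)^(n-k) * (2*q)^k : ℕ)) : K) •
              ( ((2*p : ℕ) : K) • (d ((⇑d)^[n-k] a) * (⇑d)^[k] b)
              + ((2*q : ℕ) : K) • ((⇑d)^[n-k] a * d ((⇑d)^[k] b))) := by
      rw [Function.iterate_succ_apply', pow_succ, mul_comm, mul_smul,
        ← map_smul, ih, map_sum]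
      rw [Finset.smul_sum]
      refine Finset.sum_congr rfl fun k hk => ?_
      rw [map_smul, smul_comm, hd]
    rw [step]
    have hcast : ∀ k ∈ Finset.range (n+1),
        (((n.choose k * (2*p)^(n-k) * (2*q)^k : ℕ)) : K) •
          ( ((2*p : ℕ) : K) • (d ((⇑d)^[n-k] a) * (⇑d)^[k] b)
          + ((2*q : ℕ) : K) • ((⇑d)^[n-k] a * d ((⇑d)^[k] b)))
        = (((n.choose k * (2*p)^(n+1-k) * (2*q)^k : ℕ)) : K) •
            ((⇑d)^[n+1-k] a * (⇑d)^[k] b)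
        + (((n.choose k * (2*p)^(n-k) * (2*q)^(k+1) : ℕ)) : K) •
            ((⇑d)^[n-k] a * (⇑d)^[k+1] b) := by
      intro k hk
      have hk' : k ≤ n := Nat.lt_succ_iff.mp (Finset.mem_range.mp hk)
      have h1 : n + 1 - k = (n - k) + 1 := by omega
      rw [smul_add, smul_smul, smul_smul, h1,
        Function.iterate_succ_apply', Function.iterate_succ_apply']
      push_cast
      ring_nf
    rw [Finset.sum_congr rfl hcast, Finset.sum_add_distrib]
    -- Now the combinatorial reshuffle.
    rw [Finset.sum_range_succ' (fun k =>
      ((((n+1).choose k * (2*p)^(n+1-k) * (2*q)^k : ℕ)) : K) •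
        ((⇑d)^[n+1-k] a * (⇑d)^[k] b)) (n+1)]
    have hpascal : ∀ i ∈ Finset.range (n+1),
        ((((n+1).choose (i+1) * (2*p)^(n+1-(i+1)) * (2*q)^(i+1) : ℕ)) : K) •
          ((⇑d)^[n+1-(i+1)] a * (⇑d)^[i+1] b)
        = (((n.choose (i+1) * (2*p)^(n+1-(i+1)) * (2*q)^(i+1) : ℕ)) : K) •
            ((⇑d)^[n+1-(i+1)] a * (⇑d)^[i+1] b)
        + (((n.choose i * (2*p)^(n-i) * (2*q)^(i+1) : ℕ)) : K) •
            ((⇑d)^[n-i] a * (⇑d)^[i+1] b) := by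
      intro i hi
      have h2 : n + 1 - (i+1) = n - i := by omega
      rw [h2, Nat.choose_succ_succ, ← add_smul]
      congr 1
      push_cast
      ring
    rw [Finset.sum_congr rfl hpascal, Finset.sum_add_distrib]
    have hfirst : (∑ i ∈ Finset.range (n+1),
        (((n.choose (i+1) * (2*p)^(n+1-(i+1)) * (2*q)^(i+1) : ℕ)) : K) •
          ((⇑d)^[n+1-(i+1)] a * (⇑d)^[i+1] b))
        + ((((n+1).choose 0 * (2*p)^(n+1-0) * (2*q)^0 : ℕ)) : K) •
            ((⇑d)^[n+1-0] a * (⇑d)^[0] b)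
        = ∑ k ∈ Finset.range (n+1),
            (((n.choose k * (2*p)^(n+1-k) * (2*q)^k : ℕ)) : K) •
              ((⇑d)^[n+1-k] a * (⇑d)^[k] b) := by
      have h0 : ((n+1).choose 0 * (2*p)^(n+1-0) * (2*q)^0 : ℕ)
          = (n.choose 0 * (2*p)^(n+1-0) * (2*q)^0 : ℕ) := by simp
      rw [h0, ← Finset.sum_range_succ' (fun k =>
        (((n.choose k * (2*p)^(n+1-k) * (2*q)^k : ℕ)) : K) •
          ((⇑d)^[n+1-k] a * (⇑d)^[k] b)) (n+1),
        Finset.sum_range_succ]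
      simp [Nat.choose_succ_self]
    rw [← hfirst]; abel

/-- Lemma 1(i): iterated (p,q)-derivation Leibniz-type formula. -/
theorem pq_derivation_iterate_formula
    {K : Type*} [Field K] [CharZero K]
    {A : Type*} [NonUnitalRing A] [Module K A]
    [SMulCommClass K A A] [IsScalarTower K A A]
    (p q : ℕ) (hpq : p + q ≠ 0)
    (d : A →ₗ[K] A)
    (hd : ∀ x y : A, ((p + q : ℕ) : K) • d (x * y)
        = ((2 * p : ℕ) : K) • (d x * y) + ((2 * q : ℕ) : K) • (x * d y))
    (n : ℕ) (a b : A) :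
    (⇑d)^[n] (a * b)
      = ((2 : K) ^ n / ((p + q : ℕ) : K) ^ n) •
          ∑ k ∈ Finset.range (n + 1),
            (((n.choose k : ℕ) : K) * ((p : K)) ^ (n - k) * ((q : K)) ^ k) •
              ((⇑d)^[n - k] a * (⇑d)^[k] b) := by
  have hs : (((p + q : ℕ) : K)) ≠ 0 := Nat.cast_ne_zero.mpr hpq
  have hsn : (((p + q : ℕ) : K)) ^ n ≠ 0 := pow_ne_zero _ hs
  have aux := pq_derivation_iterate_aux p q d hd n a b
  have h1 : (⇑d)^[n] (a * b)
      = (((p + q : ℕ) : K) ^ n)⁻¹ •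
          ∑ k ∈ Finset.range (n + 1),
            (((n.choose k * (2*p)^(n-k) * (2*q)^k : ℕ)) : K) •
              ((⇑d)^[n-k] a * (⇑d)^[k] b) := by
    rw [← aux, inv_smul_smul₀ hsn]
  rw [h1, Finset.smul_sum, Finset.smul_sum]
  refine Finset.sum_congr rfl fun k hk => ?_
  have hk' : k ≤ n := Nat.lt_succ_iff.mp (Finset.mem_range.mp hk)
  rw [smul_smul, smul_smul]
  congr 1
  have h2 : (2 : K) ^ (n - k) * 2 ^ k = 2 ^ n := by
    rw [← pow_add, Nat.sub_add_cancel hk']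
  push_cast
  field_simp
  ring_nf
  rw [mul_assoc, h2]
end

section
/- Let A be an associative algebra over ℂ, let p, q be non-negative integers with p + q ≠ 0, let d : A → A be a (p,q)-derivation, and let I be a two-sided ideal of A. Then for all x ∈ I and all n ≥ 1, the element dⁿ(xⁿ) − n! · (2/(p+q))^{(n²+n−2)/2} · q^{(n²−n)/2} · p^{n−1} · (d(x))ⁿ lies in I. -/
open Finset

private lemma leib_iter' {A : Type*} [Ring A] [Algebra ℂ A] (d : A →ₗ[ℂ] A) (a b : ℂ)
    (hD : ∀ u v : A, d (u * v) = a • (d u * v) + b • (u * d v)) :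
    ∀ (m : ℕ) (u v : A), (⇑d)^[m] (u * v) = ∑ j ∈ Finset.range (m + 1),
      ((m.choose j : ℂ) * a ^ j * b ^ (m - j)) • ((⇑d)^[j] u * (⇑d)^[m - j] v) := by
  intro m
  induction m with
  | zero => intro u v; simp
  | succ m ih =>
    intro u v
    rw [Function.iterate_succ_apply', ih, map_sum]
    have key : ∀ (c : ℂ) (U V : A), d (c • (U * V)) = (c * a) • (d U * V) + (c * b) • (U * d V) :=
      fun c U V => by rw [map_smul, hD, smul_add, smul_smul, smul_smul]
    simp only [key]
    rw [Finset.sum_add_distrib]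
    conv_rhs => rw [Finset.sum_range_succ']
    simp only [Nat.succ_sub_succ, Nat.choose_succ_succ, Nat.cast_add, add_mul, add_smul,
      Finset.sum_add_distrib, Nat.choose_zero_right, Nat.cast_one, pow_zero, Nat.sub_zero,
      Function.iterate_zero_apply]
    rw [add_assoc]
    congr 1
    · refine Finset.sum_congr rfl fun x hx => ?_
      rw [Function.iterate_succ_apply']
      congr 1
      ring
    · rw [Finset.sum_range_succ']
      conv_rhs => rw [Finset.sum_range_succ]
      simp only [Nat.choose_succ_self, Nat.cast_zero, zero_mul, zero_smul, add_zero,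
        Nat.choose_zero_right, Nat.cast_one, one_mul, pow_zero, Nat.sub_zero,
        Function.iterate_zero_apply]
      congr 1
      · refine Finset.sum_congr rfl fun x hx => ?_
        have hx' : x < m := Finset.mem_range.mp hx
        have e1 : m - (x + 1) + 1 = m - x := by omega
        rw [← Function.iterate_succ_apply' d]; simp only [Nat.succ_eq_add_one]
        rw [e1, mul_assoc, ← pow_succ, e1]
      · rw [← Function.iterate_succ_apply' d, ← pow_succ]

private lemma low_mem' {A : Type*} [Ring A] [Algebra ℂ A] (d : A →ₗ[ℂ] A) (a b : ℂ)
    (hD : ∀ u v : A, d (u * v) = a • (d u * v) + b • (u * d v))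
    (I : Submodule ℂ A)
    (hIl : ∀ a x : A, x ∈ I → a * x ∈ I)
    (hIr : ∀ a x : A, x ∈ I → x * a ∈ I)
    (x : A) (hx : x ∈ I) :
    ∀ (n m : ℕ), m < n → (⇑d)^[m] (x ^ n) ∈ I := by
  intro n
  induction n with
  | zero => intro m hm; omega
  | succ n ihn =>
    intro m hm
    rw [pow_succ', leib_iter' d a b hD]
    refine Submodule.sum_mem I fun j hj => ?_
    have hj' : j ≤ m := by simpa using Nat.lt_succ_iff.mp (Finset.mem_range.mp hj)
    rcases Nat.eq_zero_or_pos j with rfl | hjpos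
    · simp only [Function.iterate_zero_apply]
      exact Submodule.smul_mem I _ (hIr _ _ hx)
    · exact Submodule.smul_mem I _ (hIl _ _ (ihn (m - j) (by omega)))

private lemma main_mem' {A : Type*} [Ring A] [Algebra ℂ A] (d : A →ₗ[ℂ] A) (a b : ℂ)
    (hD : ∀ u v : A, d (u * v) = a • (d u * v) + b • (u * d v))
    (I : Submodule ℂ A)
    (hIl : ∀ a x : A, x ∈ I → a * x ∈ I)
    (hIr : ∀ a x : A, x ∈ I → x * a ∈ I)
    (x : A) (hx : x ∈ I) (n : ℕ) (hn : 1 ≤ n) :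
    (⇑d)^[n] (x ^ n)
      - ((n.factorial : ℂ) * a ^ (n - 1) * b ^ ((n ^ 2 - n) / 2)) • (d x) ^ n ∈ I := by
  induction n, hn using Nat.le_induction with
  | base => simp
  | succ n hn ih =>
    have hexp : (⇑d)^[n+1] (x ^ (n+1)) = ∑ j ∈ Finset.range (n + 2),
        (((n+1).choose j : ℂ) * a ^ j * b ^ (n + 1 - j)) •
          ((⇑d)^[j] x * (⇑d)^[n + 1 - j] (x ^ n)) := by
      rw [pow_succ', leib_iter' d a b hD]
    set f : ℕ → A := fun j => (((n+1).choose j : ℂ) * a ^ j * b ^ (n + 1 - j)) •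
          ((⇑d)^[j] x * (⇑d)^[n + 1 - j] (x ^ n)) with hf
    set C : ℂ := ((n+1).factorial : ℂ) * a ^ (n + 1 - 1) * b ^ (((n+1) ^ 2 - (n+1)) / 2) with hC
    have hsplit : (⇑d)^[n+1] (x ^ (n+1)) - C • (d x) ^ (n+1)
        = (∑ j ∈ Finset.range n, f (j + 1 + 1)) + (f 1 - C • (d x) ^ (n+1)) + f 0 := by
      rw [hexp, Finset.sum_range_succ', Finset.sum_range_succ']
      abel
    rw [hsplit]
    refine add_mem (add_mem (Submodule.sum_mem I fun j hj => ?_) ?_) ?_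
    · exact Submodule.smul_mem I _ (hIl _ _
        (low_mem' d a b hD I hIl hIr x hx n (n + 1 - (j + 1 + 1))
          (by have := Finset.mem_range.mp hj; omega)))
    · -- the main term
      have hkey : f 1 - C • (d x) ^ (n+1)
          = (((n+1 : ℕ) : ℂ) * a * b ^ n) •
              (d x * ((⇑d)^[n] (x ^ n)
                - ((n.factorial : ℂ) * a ^ (n - 1) * b ^ ((n ^ 2 - n) / 2)) • (d x) ^ n)) := by
        have hCeq : C = (((n+1 : ℕ) : ℂ) * a * b ^ n) *
            ((n.factorial : ℂ) * a ^ (n - 1) * b ^ ((n ^ 2 - n) / 2)) := by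
          obtain ⟨s, hs⟩ : ∃ s, n ^ 2 = s := ⟨_, rfl⟩
          obtain ⟨t, ht⟩ : ∃ t, (n+1) ^ 2 = t := ⟨_, rfl⟩
          have h1 : t = s + 2*n + 1 := by rw [← hs, ← ht]; ring
          have h2 : n ≤ s := by rw [← hs]; exact Nat.le_self_pow two_ne_zero n
          obtain ⟨k, hk⟩ := (Nat.even_sub h2).mpr
            (by rw [← hs]; simp [Nat.even_pow, parity_simps])
          have e1 : ((n+1) ^ 2 - (n+1)) / 2 = n + (n ^ 2 - n) / 2 := by
            rw [hs, ht]; omega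
          have e2 : n + 1 - 1 = 1 + (n - 1) := by omega
          rw [hC, e1, e2, pow_add, pow_add, Nat.factorial_succ]
          push_cast
          ring
        rw [hf]
        simp only [Function.iterate_succ_apply, Function.iterate_zero_apply, Nat.choose_one_right,
          pow_one, Nat.add_sub_cancel]
        rw [hCeq]
        conv_rhs => rw [mul_sub, mul_smul_comm, smul_sub, smul_smul]
        rw [← pow_succ']
      rw [hkey]
      exact Submodule.smul_mem I _ (hIl _ _ ih)
    · simp only [hf, Function.iterate_zero_apply]
      exact Submodule.smul_mem I _ (hIr _ _ hx)

/-- Lemma 1(ii): for an ideal `I` and a (p,q)-derivation `d`,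
`dⁿ(xⁿ) − n!·(2/(p+q))^((n²+n−2)/2)·q^((n²−n)/2)·p^(n−1)·(d x)ⁿ ∈ I`. -/
theorem pq_derivation_ideal_power_formula
    {A : Type*} [Ring A] [Algebra ℂ A]
    (p q : ℕ) (hpq : p + q ≠ 0)
    (d : A →ₗ[ℂ] A)
    (hd : ∀ x y : A, ((p + q : ℕ) : ℂ) • d (x * y)
        = ((2 * p : ℕ) : ℂ) • (d x * y) + ((2 * q : ℕ) : ℂ) • (x * d y))
    (I : Submodule ℂ A)
    (hIl : ∀ a x : A, x ∈ I → a * x ∈ I)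
    (hIr : ∀ a x : A, x ∈ I → x * a ∈ I)
    (x : A) (hx : x ∈ I) (n : ℕ) (hn : 1 ≤ n) :
    (⇑d)^[n] (x ^ n)
      - ((n.factorial : ℂ) * (2 / ((p + q : ℕ) : ℂ)) ^ ((n ^ 2 + n - 2) / 2)
          * (q : ℂ) ^ ((n ^ 2 - n) / 2) * (p : ℂ) ^ (n - 1)) • (d x) ^ n ∈ I := by
  have hS : ((p : ℂ) + (q : ℂ)) ≠ 0 := by
    have h0 : ((p + q : ℕ) : ℂ) ≠ 0 := Nat.cast_ne_zero.mpr hpq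
    push_cast at h0; exact h0
  have hD : ∀ u v : A, d (u * v)
      = (2 * (p : ℂ) / ((p : ℂ) + q)) • (d u * v) + (2 * (q : ℂ) / ((p : ℂ) + q)) • (u * d v) := by
    intro u v
    have h := hd u v
    push_cast at h
    have h2 := congrArg (fun z : A => (((p : ℂ) + q))⁻¹ • z) h
    simp only [smul_smul, smul_add] at h2
    rw [inv_mul_cancel₀ hS, one_smul, inv_mul_eq_div, inv_mul_eq_div] at h2
    exact h2
  have key := main_mem' d (2 * (p : ℂ) / ((p : ℂ) + q)) (2 * (q : ℂ) / ((p : ℂ) + q))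
    hD I hIl hIr x hx n hn
  have hcoef : ((n.factorial : ℂ) * (2 / ((p + q : ℕ) : ℂ)) ^ ((n ^ 2 + n - 2) / 2)
          * (q : ℂ) ^ ((n ^ 2 - n) / 2) * (p : ℂ) ^ (n - 1))
      = (n.factorial : ℂ) * (2 * (p : ℂ) / ((p : ℂ) + q)) ^ (n - 1)
          * (2 * (q : ℂ) / ((p : ℂ) + q)) ^ ((n ^ 2 - n) / 2) := by
    have hE : (n ^ 2 + n - 2) / 2 = (n - 1) + (n ^ 2 - n) / 2 := by
      obtain ⟨s, hs⟩ : ∃ s, n ^ 2 = s := ⟨_, rfl⟩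
      have h2 : n ≤ s := hs ▸ Nat.le_self_pow two_ne_zero n
      obtain ⟨k, hk⟩ := (Nat.even_sub h2).mpr (by rw [← hs]; simp [Nat.even_pow, parity_simps])
      rw [hs]
      omega
    have e1 : 2 * (p : ℂ) / ((p : ℂ) + q) = (2 / ((p : ℂ) + q)) * p := by ring
    have e2 : 2 * (q : ℂ) / ((p : ℂ) + q) = (2 / ((p : ℂ) + q)) * q := by ring
    push_cast
    rw [e1, e2, mul_pow, mul_pow, hE, pow_add]
    ring
  rw [hcoef]
  exact key
end

section
/- Let A be a unital Banach algebra, let p, q be positive integers with p ≠ 0, and let d : A → A be a bounded (p,q)-derivation. Then every primitive ideal P of A is invariant under d, i.e., d(P) ⊆ P. -/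
open Finset Nat

private lemma iter_leibniz {A : Type*} [NormedRing A] [NormedAlgebra ℂ A]
    (d : A →L[ℂ] A) (hder : ∀ x y : A, d (x * y) = d x * y + x * d y) (n : ℕ) (x y : A) :
    (⇑d)^[n] (x * y)
      = ∑ k ∈ Finset.range (n + 1), n.choose k • ((⇑d)^[k] x * (⇑d)^[n - k] y) := by
  induction n with
  | zero => simp
  | succ n ih =>
    rw [Function.iterate_succ_apply', ih, map_sum]
    have step : ∀ k ∈ Finset.range (n + 1),
        d (n.choose k • ((⇑d)^[k] x * (⇑d)^[n - k] y))
          = n.choose k • ((⇑d)^[k + 1] x * (⇑d)^[n - k] y)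
            + n.choose k • ((⇑d)^[k] x * (⇑d)^[(n - k) + 1] y) := by
      intro k _
      rw [map_nsmul, hder, smul_add, Function.iterate_succ_apply', Function.iterate_succ_apply']
    rw [Finset.sum_congr rfl step, Finset.sum_add_distrib]
    rw [Finset.sum_range_succ'
        (fun k => (n + 1).choose k • ((⇑d)^[k] x * (⇑d)^[n + 1 - k] y)) (n + 1)]
    have e1 : ∀ k ∈ Finset.range (n + 1),
        (n + 1).choose (k + 1) • ((⇑d)^[k + 1] x * (⇑d)^[n + 1 - (k + 1)] y)
          = n.choose k • ((⇑d)^[k + 1] x * (⇑d)^[n - k] y)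
            + n.choose (k + 1) • ((⇑d)^[k + 1] x * (⇑d)^[n - k] y) := by
      intro k _
      have h2 : n + 1 - (k + 1) = n - k := by omega
      rw [h2, Nat.choose_succ_succ, add_nsmul]
    rw [Finset.sum_congr rfl e1, Finset.sum_add_distrib]
    have e2 : (∑ k ∈ Finset.range (n + 1), n.choose k • ((⇑d)^[k] x * (⇑d)^[(n - k) + 1] y))
        = (∑ k ∈ Finset.range (n + 1), n.choose (k + 1) • ((⇑d)^[k + 1] x * (⇑d)^[n - k] y))
          + (n + 1).choose 0 • ((⇑d)^[0] x * (⇑d)^[n + 1 - 0] y) := by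
      rw [Finset.sum_range_succ' (fun k => n.choose k • ((⇑d)^[k] x * (⇑d)^[(n - k) + 1] y)) n,
          Finset.sum_range_succ (fun k => n.choose (k + 1) • ((⇑d)^[k + 1] x * (⇑d)^[n - k] y)) n]
      rw [Nat.choose_succ_self, zero_nsmul, add_zero]
      congr 1
      · apply Finset.sum_congr rfl
        intro k hk
        rw [Finset.mem_range] at hk
        have h3 : n - (k + 1) + 1 = n - k := by omega
        rw [h3]
      · simp
    rw [e2]
    abel

private lemma claimA {A : Type*} [NormedRing A] [NormedAlgebra ℂ A]
    (d : A →L[ℂ] A) (hder : ∀ x y : A, d (x * y) = d x * y + x * d y)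
    (P : Ideal A) (hPr : ∀ x ∈ P, ∀ y, x * y ∈ P) {c : A} (hc : c ∈ P) :
    ∀ n, ∀ j < n, (⇑d)^[j] (c ^ n) ∈ P := by
  intro n
  induction n with
  | zero => intro j hj; omega
  | succ n ih =>
    intro j hj
    rw [_root_.pow_succ', iter_leibniz d hder]
    apply Ideal.sum_mem
    intro k hk
    rw [Finset.mem_range] at hk
    rw [nsmul_eq_mul]
    apply Ideal.mul_mem_left
    rcases Nat.eq_zero_or_pos k with rfl | hk1
    · simpa using hPr c hc ((⇑d)^[j] (c ^ n))
    · exact Ideal.mul_mem_left _ _ (ih (j - k) (by omega))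

private lemma claimB {A : Type*} [NormedRing A] [NormedAlgebra ℂ A]
    (d : A →L[ℂ] A) (hder : ∀ x y : A, d (x * y) = d x * y + x * d y)
    (P : Ideal A) (hPr : ∀ x ∈ P, ∀ y, x * y ∈ P) {c : A} (hc : c ∈ P) :
    ∀ n, (⇑d)^[n] (c ^ n) - (n !) • (d c) ^ n ∈ P := by
  intro n
  induction n with
  | zero => simp
  | succ n ih =>
    have expand : (⇑d)^[n + 1] (c ^ (n + 1))
        = (∑ k ∈ Finset.range n,
            (n + 1).choose (k + 1 + 1) • ((⇑d)^[k + 1 + 1] c * (⇑d)^[n + 1 - (k + 1 + 1)] (c ^ n)))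
          + (n + 1).choose (0 + 1) • ((⇑d)^[0 + 1] c * (⇑d)^[n + 1 - (0 + 1)] (c ^ n))
          + (n + 1).choose 0 • ((⇑d)^[0] c * (⇑d)^[n + 1 - 0] (c ^ n)) := by
      rw [_root_.pow_succ', iter_leibniz d hder,
        Finset.sum_range_succ'
          (fun k => (n + 1).choose k • ((⇑d)^[k] c * (⇑d)^[n + 1 - k] (c ^ n))) (n + 1),
        Finset.sum_range_succ'
          (fun k => (n + 1).choose (k + 1) • ((⇑d)^[k + 1] c * (⇑d)^[n + 1 - (k + 1)] (c ^ n))) n]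
    have h1 : (∑ k ∈ Finset.range n,
          (n + 1).choose (k + 1 + 1) • ((⇑d)^[k + 1 + 1] c * (⇑d)^[n + 1 - (k + 1 + 1)] (c ^ n))) ∈ P := by
      apply Ideal.sum_mem
      intro k hk
      rw [Finset.mem_range] at hk
      rw [nsmul_eq_mul]
      exact Ideal.mul_mem_left _ _ (Ideal.mul_mem_left _ _
        (claimA d hder P hPr hc n (n + 1 - (k + 1 + 1)) (by omega)))
    have h3 : (n + 1).choose 0 • ((⇑d)^[0] c * (⇑d)^[n + 1 - 0] (c ^ n)) ∈ P := by
      simpa using hPr c hc ((⇑d)^[n + 1] (c ^ n))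
    have h2 : (n + 1) • (d c * ((⇑d)^[n] (c ^ n) - (n !) • (d c) ^ n)) ∈ P := by
      rw [nsmul_eq_mul]
      exact Ideal.mul_mem_left _ _ (Ideal.mul_mem_left _ _ ih)
    have heq : (⇑d)^[n + 1] (c ^ (n + 1)) - ((n + 1)!) • (d c) ^ (n + 1)
        = ((∑ k ∈ Finset.range n,
            (n + 1).choose (k + 1 + 1) • ((⇑d)^[k + 1 + 1] c * (⇑d)^[n + 1 - (k + 1 + 1)] (c ^ n)))
          + (n + 1) • (d c * ((⇑d)^[n] (c ^ n) - (n !) • (d c) ^ n)))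
          + (n + 1).choose 0 • ((⇑d)^[0] c * (⇑d)^[n + 1 - 0] (c ^ n)) := by
      rw [expand]
      simp only [Nat.choose_one_right, Nat.choose_zero_right, Function.iterate_one,
        Function.iterate_zero, id_eq, one_smul, Nat.add_sub_cancel, Nat.sub_zero,
        Nat.factorial_succ, zero_add]
      rw [mul_sub, smul_sub, mul_smul_comm, smul_smul, ← _root_.pow_succ']
      abel
    rw [heq]
    exact Ideal.add_mem _ (Ideal.add_mem _ h1 h2) h3

private lemma iter_norm_le {A : Type*} [NormedRing A] [NormedAlgebra ℂ A]
    (d : A →L[ℂ] A) : ∀ (n : ℕ) (x : A), ‖(⇑d)^[n] x‖ ≤ ‖d‖ ^ n * ‖x‖ := by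
  intro n
  induction n with
  | zero => intro x; simp
  | succ n ih =>
    intro x
    rw [Function.iterate_succ_apply']
    calc ‖d ((⇑d)^[n] x)‖ ≤ ‖d‖ * ‖(⇑d)^[n] x‖ := d.le_opNorm _
    _ ≤ ‖d‖ * (‖d‖ ^ n * ‖x‖) := by
        exact mul_le_mul_of_nonneg_left (ih x) (norm_nonneg d)
    _ = ‖d‖ ^ (n + 1) * ‖x‖ := by ring

/-- Primitive ideals of a unital Banach algebra are invariant under bounded
(p,q)-derivations. -/
theorem primitive_ideal_invariant_under_bounded_pq_derivation
    {A : Type*} [NormedRing A] [NormedAlgebra ℂ A] [CompleteSpace A]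
    (p q : ℕ) (hp : 0 < p) (hq : 0 < q)
    (d : A →L[ℂ] A)
    (hd : ∀ x y : A, ((p + q : ℕ) : ℂ) • d (x * y)
        = ((2 * p : ℕ) : ℂ) • (d x * y) + ((2 * q : ℕ) : ℂ) • (x * d y))
    (P : Ideal A)
    (hPprim : ∃ (M : Type) (_ : AddCommGroup M) (_ : Module A M),
        IsSimpleModule A M ∧ P = Module.annihilator A M) :
    ∀ x ∈ P, d x ∈ P := by
  -- First: `d` is an honest derivation (if `p ≠ q` then `d = 0`).
  have hd1 : d (1 : A) = 0 := by
    have h := hd 1 1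
    rw [mul_one, mul_one, one_mul] at h
    have h2 : (((p + q : ℕ) : ℂ) - ((2 * p : ℕ) : ℂ) - ((2 * q : ℕ) : ℂ)) • d (1 : A) = 0 := by
      rw [sub_smul, sub_smul, h]
      abel
    have h3 : (((p + q : ℕ) : ℂ) - ((2 * p : ℕ) : ℂ) - ((2 * q : ℕ) : ℂ)) ≠ 0 := by
      push_cast
      intro hcon
      have : (p : ℂ) + q = 0 := by ring_nf at hcon ⊢; linear_combination -hcon
      rw [← Nat.cast_add, Nat.cast_eq_zero] at this
      omega
    exact (smul_eq_zero.mp h2).resolve_left h3 |>.symm ▸ (smul_eq_zero.mp h2).resolve_left h3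
  have hder : ∀ x y : A, d (x * y) = d x * y + x * d y := by
    rcases eq_or_ne p q with hpq | hpq
    · -- p = q : genuine derivation
      subst hpq
      intro x y
      have h := hd x y
      have hc : ((2 * p : ℕ) : ℂ) ≠ 0 := by
        rw [Nat.cast_ne_zero]; omega
      have h2 : ((2 * p : ℕ) : ℂ) • d (x * y) = ((2 * p : ℕ) : ℂ) • (d x * y + x * d y) := by
        rw [smul_add]
        calc ((2 * p : ℕ) : ℂ) • d (x * y) = ((p + p : ℕ) : ℂ) • d (x * y) := by
              norm_num; ring_nf
        _ = ((2 * p : ℕ) : ℂ) • (d x * y) + ((2 * p : ℕ) : ℂ) • (x * d y) := hd x y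
      exact smul_right_injective A hc h2
    · -- p ≠ q : d = 0
      have hzero : ∀ x : A, d x = 0 := by
        intro x
        have h := hd x 1
        rw [mul_one, mul_one, hd1, mul_zero, smul_zero, add_zero] at h
        have h2 : (((p + q : ℕ) : ℂ) - ((2 * p : ℕ) : ℂ)) • d x = 0 := by
          rw [sub_smul, h, sub_self]
        have h3 : (((p + q : ℕ) : ℂ) - ((2 * p : ℕ) : ℂ)) ≠ 0 := by
          push_cast
          intro hcon
          have : (q : ℂ) = (p : ℂ) := by linear_combination hcon
          rw [Nat.cast_inj] at this
          omega
        exact (smul_eq_zero.mp h2).resolve_left h3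
      intro x y
      rw [hzero, hzero, hzero, zero_mul, mul_zero, add_zero]
  -- Unpack primitivity.
  intro a ha
  by_contra hda
  obtain ⟨M, _iAG, _iMod, hsimp, hPdef⟩ := hPprim
  subst hPdef
  -- annihilators are two-sided ideals
  have hPr : ∀ x ∈ Module.annihilator A M, ∀ y : A, x * y ∈ Module.annihilator A M := by
    intro x hx y
    rw [Module.mem_annihilator] at hx ⊢
    intro m
    rw [mul_smul, hx]
  -- find `c ∈ P` and `m₀ ≠ 0` with `(d c) • m₀ = m₀`
  rw [Module.mem_annihilator] at hda
  push_neg at hda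
  obtain ⟨m0, hm0⟩ := hda
  have hm0ne : m0 ≠ 0 := by
    intro h
    exact hm0 (by rw [h, smul_zero])
  have hspan : Submodule.span A {d a • m0} = ⊤ := by
    rcases eq_bot_or_eq_top (Submodule.span A {d a • m0}) with h | h
    · exfalso
      have h0 : d a • m0 ∈ Submodule.span A {d a • m0} :=
        Submodule.mem_span_singleton_self _
      rw [h, Submodule.mem_bot] at h0
      exact hm0 h0
    · exact h
  obtain ⟨u, hu⟩ : ∃ u : A, u • (d a • m0) = m0 :=
    Submodule.mem_span_singleton.mp (hspan ▸ Submodule.mem_top)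
  set c : A := u * a with hcdef
  have hc : c ∈ Module.annihilator A M := Ideal.mul_mem_left _ u ha
  have hcv : d c • m0 = m0 := by
    rw [hcdef, hder u a, add_smul, mul_smul, mul_smul,
      Module.mem_annihilator.mp ha m0, smul_zero, zero_add, hu]
  -- the left ideal `L = ann(m₀)` and its closure
  set L : Ideal A := LinearMap.ker (LinearMap.toSpanSingleton A M m0) with hLdef
  have hmemL : ∀ x : A, x ∈ L ↔ x • m0 = 0 := by
    intro x
    simp [hLdef, LinearMap.mem_ker, LinearMap.toSpanSingleton_apply]
  set S : Set A := closure (L : Set A) with hSdef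
  have hSne : S.Nonempty := ⟨0, subset_closure (show (0:A) ∈ (L : Set A) from L.zero_mem)⟩
  have h1S : (1 : A) ∉ S := by
    have hsub : (L : Set A) ⊆ {x : A | IsUnit x}ᶜ := by
      intro x hx hux
      obtain ⟨v, hv⟩ := hux
      apply hm0ne
      calc m0 = (1 : A) • m0 := (one_smul A m0).symm
      _ = ((↑v⁻¹ * ↑v : A)) • m0 := by rw [v.inv_mul]
      _ = (↑v⁻¹ : A) • ((↑v : A) • m0) := by rw [mul_smul]
      _ = (↑v⁻¹ : A) • ((x : A) • m0) := by rw [hv]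
      _ = 0 := by rw [(hmemL x).mp hx, smul_zero]
    have hcl : S ⊆ {x : A | IsUnit x}ᶜ :=
      closure_minimal hsub Units.isOpen.isClosed_compl
    intro h1
    exact hcl h1 isUnit_one
  set δ : ℝ := Metric.infDist (1 : A) S with hδdef
  have hδ : 0 < δ := by
    rw [hδdef]
    exact (isClosed_closure.notMem_iff_infDist_pos hSne).mp h1S
  -- L is stable under ℂ-scaling
  have hLsmul : ∀ (z : ℂ) (x : A), x ∈ L → z • x ∈ L := by
    intro z x hx
    rw [hmemL] at hx ⊢
    have : z • x = (z • (1 : A)) * x := by rw [smul_mul_assoc, one_mul]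
    rw [this, mul_smul, hx, smul_zero]
  -- key inequality
  have key : ∀ n : ℕ, 0 < n → (n ! : ℝ) * δ ≤ (‖d‖ * ‖c‖) ^ n := by
    intro n hn
    have hB := claimB d hder (Module.annihilator A M) hPr hc n
    -- `d^[n](cⁿ) - n! ∈ L`
    have hpow : ∀ k : ℕ, (d c) ^ k • m0 = m0 := by
      intro k
      induction k with
      | zero => rw [pow_zero, one_smul]
      | succ k ihk => rw [_root_.pow_succ, mul_smul, hcv, ihk]
    have hyL : (⇑d)^[n] (c ^ n) - ((n ! : ℕ) : A) ∈ L := by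
      rw [hmemL, sub_smul]
      have h1 : (⇑d)^[n] (c ^ n) • m0 = n ! • m0 := by
        have h2 := Module.mem_annihilator.mp hB m0
        rw [sub_smul, sub_eq_zero] at h2
        rw [h2]
        have : (n ! • (d c) ^ n) • m0 = n ! • ((d c) ^ n • m0) := by
          rw [← Nat.cast_smul_eq_nsmul A (n !) ((d c) ^ n), smul_eq_mul, mul_smul,
            Nat.cast_smul_eq_nsmul]
        rw [this, hpow]
      rw [h1, Nat.cast_smul_eq_nsmul, sub_self]
    -- lower bound via infDist
    have hfacC : ((n ! : ℕ) : ℂ) ≠ 0 := by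
      rw [Nat.cast_ne_zero]
      exact Nat.factorial_ne_zero n
    set z : A := ((n ! : ℕ) : ℂ)⁻¹ • (((n ! : ℕ) : A) - (⇑d)^[n] (c ^ n)) with hzdef
    have hzL : z ∈ L := by
      apply hLsmul
      have : ((n ! : ℕ) : A) - (⇑d)^[n] (c ^ n) = -((⇑d)^[n] (c ^ n) - ((n ! : ℕ) : A)) :=
        (neg_sub _ _).symm
      rw [this]
      exact neg_mem hyL
    have hcast : ((n ! : ℕ) : A) = ((n ! : ℕ) : ℂ) • (1 : A) := by
      rw [← Algebra.algebraMap_eq_smul_one, map_natCast]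
    have hrepr : (⇑d)^[n] (c ^ n) = ((n ! : ℕ) : ℂ) • ((1 : A) - z) := by
      rw [smul_sub, hzdef, smul_inv_smul₀ hfacC, ← hcast, sub_sub_cancel]
    have hlow : (n ! : ℝ) * δ ≤ ‖(⇑d)^[n] (c ^ n)‖ := by
      rw [hrepr, norm_smul]
      have h4 : ‖((n ! : ℕ) : ℂ)‖ = (n ! : ℝ) := by
        rw [RCLike.norm_natCast]
      rw [h4]
      apply mul_le_mul_of_nonneg_left _ (by positivity)
      calc δ ≤ dist (1 : A) z := Metric.infDist_le_dist_of_mem (subset_closure hzL)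
      _ = ‖(1 : A) - z‖ := by rw [dist_eq_norm]
    have hhigh : ‖(⇑d)^[n] (c ^ n)‖ ≤ (‖d‖ * ‖c‖) ^ n := by
      calc ‖(⇑d)^[n] (c ^ n)‖ ≤ ‖d‖ ^ n * ‖c ^ n‖ := iter_norm_le d n _
      _ ≤ ‖d‖ ^ n * ‖c‖ ^ n := by
          exact mul_le_mul_of_nonneg_left (norm_pow_le' c hn) (by positivity)
      _ = (‖d‖ * ‖c‖) ^ n := by rw [mul_pow]
    linarith
  -- contradiction with factorial growth
  have htend := FloorSemiring.tendsto_pow_div_factorial_atTop (K := ℝ) (‖d‖ * ‖c‖)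
  have hev := htend.eventually_lt_const hδ
  obtain ⟨n, hn1, hn2⟩ := (hev.and (Filter.eventually_ge_atTop 1)).exists
  have hfac : (0 : ℝ) < (n ! : ℝ) := by positivity
  rw [div_lt_iff₀ hfac] at hn1
  have := key n (by omega)
  nlinarith
end

section
/- Let A be an associative ℂ-algebra, p and q distinct non-negative integers with p + q ≠ 0, d : A → A a (p,q)-derivation, and λ a non-zero scalar. If a ∈ A satisfies d(a) = λ·a, then a³ = 0. -/
/-- Eigenvectors of a (p,q)-derivation for non-zero eigenvalues are nilpotent of
index at most 3. -/
theorem eigenvector_of_pq_derivation_cube_zero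
    {A : Type*} [Ring A] [Algebra ℂ A]
    (p q : ℕ) (hne : p ≠ q) (hpq : p + q ≠ 0)
    (d : A →ₗ[ℂ] A)
    (hd : ∀ x y : A, ((p + q : ℕ) : ℂ) • d (x * y)
        = ((2 * p : ℕ) : ℂ) • (d x * y) + ((2 * q : ℕ) : ℂ) • (x * d y))
    (lam : ℂ) (hlam : lam ≠ 0) (a : A) (ha : d a = lam • a) :
    a ^ 3 = 0 := by
  have hc : ((p + q : ℕ) : ℂ) ≠ 0 := Nat.cast_ne_zero.mpr hpq
  push_cast at hd hc
  have h1 : d (a * a) = (2 * lam) • (a * a) := by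
    apply smul_right_injective A hc
    dsimp only
    rw [hd a a, ha]
    simp only [smul_mul_assoc, mul_smul_comm]
    module
  have h2 := hd (a * a) a
  have h3 := hd a (a * a)
  rw [ha, h1] at h2 h3
  rw [← mul_assoc] at h3
  simp only [smul_mul_assoc, mul_smul_comm, ← mul_assoc] at h2 h3
  have e2 : ((p : ℂ) + q) • d (a * a * a) = (2 * p * (2 * lam) + 2 * q * lam) • (a * a * a) := by
    rw [h2]; module
  have e3 : ((p : ℂ) + q) • d (a * a * a) = (2 * p * lam + 2 * q * (2 * lam)) • (a * a * a) := by
    rw [h3]; module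
  have key : ((2 * (p : ℂ) * (2 * lam) + 2 * q * lam) - (2 * p * lam + 2 * q * (2 * lam))) • (a * a * a) = 0 := by
    rw [sub_smul, ← e2, ← e3, sub_self]
  rw [smul_eq_zero] at key
  rcases key with hk | hk
  · exfalso
    apply hlam
    have h0 : (2 : ℂ) * ((p : ℂ) - q) * lam = 0 := by linear_combination hk
    rcases mul_eq_zero.mp h0 with h | h
    · rcases mul_eq_zero.mp h with h | h
      · norm_num at h
      · exact absurd (sub_eq_zero.mp h) (by exact_mod_cast hne)
    · exact h
  · rw [pow_succ, pow_two]
    exact hk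
end

section
/- Let A be an associative ℂ-algebra, p ≠ q non-negative integers with p + q ≠ 0, d a (p,q)-derivation of A, λ a non-zero scalar, and a ∈ A with d(a) = λ·a. Then −a − a² is a quasi-inverse of a, i.e., a·(−a−a²) = (−a−a²)·a = a + (−a−a²). -/
/-- If `a` is an eigenvector of a (p,q)-derivation with non-zero eigenvalue, then
`-a - a²` is a quasi-inverse of `a`. -/
theorem eigenvector_quasi_inverse
    {A : Type*} [Ring A] [Algebra ℂ A]
    (p q : ℕ) (hne : p ≠ q) (hpq : p + q ≠ 0)
    (d : A →ₗ[ℂ] A)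
    (hd : ∀ x y : A, ((p + q : ℕ) : ℂ) • d (x * y)
        = ((2 * p : ℕ) : ℂ) • (d x * y) + ((2 * q : ℕ) : ℂ) • (x * d y))
    (lam : ℂ) (hlam : lam ≠ 0) (a : A) (ha : d a = lam • a) :
    a * (-a - a ^ 2) = a + (-a - a ^ 2) ∧ (-a - a ^ 2) * a = a + (-a - a ^ 2) := by
  have hN : ((p + q : ℕ) : ℂ) ≠ 0 := Nat.cast_ne_zero.mpr hpq
  have hda2 : d (a * a) = (2 * lam) • (a * a) := by
    apply smul_right_injective A hN
    show ((p + q : ℕ) : ℂ) • d (a * a) = ((p + q : ℕ) : ℂ) • (2 * lam) • (a * a)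
    rw [hd a a, ha]
    simp only [smul_mul_assoc, mul_smul_comm, smul_smul]
    match_scalars <;> push_cast <;> ring
  have h2 := hd a (a * a)
  have h3 := hd (a * a) a
  rw [ha, hda2] at h2 h3
  simp only [smul_mul_assoc, mul_smul_comm, smul_smul, mul_assoc] at h2 h3
  have hsub : (2 * lam * ((q : ℂ) - (p : ℂ))) • (a * (a * a)) = 0 := by
    linear_combination (norm := module) h3 - h2
  have hc : 2 * lam * ((q : ℂ) - (p : ℂ)) ≠ 0 := by
    have hqp : (q : ℂ) ≠ (p : ℂ) := by exact_mod_cast (Ne.symm hne)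
    simp [hlam, sub_eq_zero, hqp]
  have ha3 : a * (a * a) = 0 := by
    rcases smul_eq_zero.mp hsub with h | h
    · exact absurd h hc
    · exact h
  constructor
  · calc a * (-a - a ^ 2) = -(a * a) - a * (a * a) := by noncomm_ring
      _ = a + (-a - a ^ 2) := by rw [ha3, pow_two]; abel
  · calc (-a - a ^ 2) * a = -(a * a) - a * (a * a) := by noncomm_ring
      _ = a + (-a - a ^ 2) := by rw [ha3, pow_two]; abel
end

section
/- Let A be a unital associative ℂ-algebra, p and q distinct non-negative integers with p + q ≠ 0, d : A → A a (p,q)-derivation, and λ a non-zero complex number. Then d has no non-zero eigenvector with eigenvalue λ; i.e., d(a) = λ·a implies a = 0. -/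
/-- A (p,q)-derivation of a unital ℂ-algebra has no non-zero eigenvector for a
non-zero eigenvalue. -/
theorem no_eigenvector_unital
    {A : Type*} [Ring A] [Algebra ℂ A]
    (p q : ℕ) (hne : p ≠ q) (hpq : p + q ≠ 0)
    (d : A →ₗ[ℂ] A)
    (hd : ∀ x y : A, ((p + q : ℕ) : ℂ) • d (x * y)
        = ((2 * p : ℕ) : ℂ) • (d x * y) + ((2 * q : ℕ) : ℂ) • (x * d y))
    (lam : ℂ) (hlam : lam ≠ 0) (a : A) (ha : d a = lam • a) :
    a = 0 := by
  have hpqC : ((p + q : ℕ) : ℂ) ≠ 0 := by exact_mod_cast hpq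
  have h1 : d 1 = 0 := by
    have h := hd 1 1
    simp only [one_mul, mul_one] at h
    have h2 : ((p + q : ℕ) : ℂ) • d 1 = (2 * ((p + q : ℕ) : ℂ)) • d 1 := by
      rw [h]; push_cast; rw [← add_smul]; ring_nf
    have h3 : ((p + q : ℕ) : ℂ) • d 1 = 0 := by
      have := sub_eq_zero.mpr h2
      rw [← sub_smul] at this
      rcases smul_eq_zero.mp this with hc | hz
      · exact absurd (by linear_combination -hc) hpqC
      · rw [hz, smul_zero]
    exact (smul_eq_zero.mp h3).resolve_left hpqC |>.symm ▸ rfl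
  have h := hd a 1
  simp only [mul_one, h1, mul_zero, smul_zero, add_zero] at h
  have hda : d a = 0 := by
    have h2 : (((p + q : ℕ) : ℂ) - ((2 * p : ℕ) : ℂ)) • d a = 0 := by
      rw [sub_smul, h, sub_self]
    rcases smul_eq_zero.mp h2 with hc | hz
    · exfalso
      apply hne
      have : (q : ℂ) = (p : ℂ) := by push_cast at hc; linear_combination hc
      exact_mod_cast this.symm
    · exact hz
  rw [hda] at ha
  exact (smul_eq_zero.mp ha.symm).resolve_left hlam
end

section
/- Let A be an associative ℂ-algebra with no non-zero nilpotent elements of index at most 3 (i.e., a³ = 0 implies a = 0), let p ≠ q be non-negative integers with p + q ≠ 0, and let d be a (p,q)-derivation of A. Then for every non-zero λ ∈ ℂ, d has no non-zero eigenvector with eigenvalue λ. -/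
/-- If `A` has no non-zero nilpotents of index at most 3, then a (p,q)-derivation has
no non-zero eigenvector for any non-zero eigenvalue. -/
theorem no_eigenvector_of_no_small_nilpotents
    {A : Type*} [Ring A] [Algebra ℂ A]
    (hnil : ∀ a : A, a ^ 3 = 0 → a = 0)
    (p q : ℕ) (hne : p ≠ q) (hpq : p + q ≠ 0)
    (d : A →ₗ[ℂ] A)
    (hd : ∀ x y : A, ((p + q : ℕ) : ℂ) • d (x * y)
        = ((2 * p : ℕ) : ℂ) • (d x * y) + ((2 * q : ℕ) : ℂ) • (x * d y))
    (lam : ℂ) (hlam : lam ≠ 0) (a : A) (ha : d a = lam • a) :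
    a = 0 := by
  have hN : ((p + q : ℕ) : ℂ) ≠ 0 := by
    exact_mod_cast hpq
  -- d (a*a) = (2*lam) • (a*a)
  have h2 : d (a * a) = (2 * lam) • (a * a) := by
    have e := hd a a
    rw [ha] at e
    apply smul_right_injective A hN
    dsimp only
    rw [e]
    push_cast
    simp only [smul_smul, smul_mul_assoc, mul_smul_comm]
    rw [← add_smul]
    congr 1
    ring
  have e1 := hd (a * a) a
  have e2 := hd a (a * a)
  rw [h2, ha] at e1 e2
  rw [show a * (a * a) = a * a * a by rw [mul_assoc]] at e2
  have key : (((2 * p : ℕ) : ℂ) * (2 * lam) + ((2 * q : ℕ) : ℂ) * lam) • (a * a * a)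
      = (((2 * p : ℕ) : ℂ) * lam + ((2 * q : ℕ) : ℂ) * (2 * lam)) • (a * a * a) := by
    have := e1.symm.trans e2
    simp only [smul_mul_assoc, mul_smul_comm, smul_smul, add_smul] at this ⊢
    rw [mul_assoc] at this ⊢
    convert this using 2
  have hsub : ((((2 * p : ℕ) : ℂ) * (2 * lam) + ((2 * q : ℕ) : ℂ) * lam)
      - (((2 * p : ℕ) : ℂ) * lam + ((2 * q : ℕ) : ℂ) * (2 * lam))) • (a * a * a) = 0 := by
    rw [sub_smul, key, sub_self]
  have hc : ((((2 * p : ℕ) : ℂ) * (2 * lam) + ((2 * q : ℕ) : ℂ) * lam)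
      - (((2 * p : ℕ) : ℂ) * lam + ((2 * q : ℕ) : ℂ) * (2 * lam))) ≠ 0 := by
    push_cast
    have hpq' : (p : ℂ) ≠ (q : ℂ) := by exact_mod_cast hne
    have : (2 * (p:ℂ) * (2 * lam) + 2 * q * lam) - (2 * p * lam + 2 * q * (2 * lam))
        = 2 * ((p:ℂ) - q) * lam := by ring
    rw [this]
    exact mul_ne_zero (mul_ne_zero two_ne_zero (sub_ne_zero.mpr hpq')) hlam
  have h3 : a * a * a = 0 := by
    rcases smul_eq_zero.mp hsub with h | h
    · exact absurd h hc
    · exact h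
  exact hnil a (by rw [pow_succ, pow_two, h3])
end

section
/- Let A be an associative ℂ-algebra with a right identity E (an element with x·E = x for all x ∈ A), let p, q be non-negative integers with p + q ≠ 0 and p ≠ q, and let d be a (p,q)-derivation of A. Then d = 0. -/
/-- A (p,q)-derivation of a ℂ-algebra with a right identity vanishes. -/
theorem pq_derivation_eq_zero_of_right_identity
    {A : Type*} [NonUnitalRing A] [Module ℂ A]
    [SMulCommClass ℂ A A] [IsScalarTower ℂ A A]
    (E : A) (hE : ∀ x : A, x * E = x)
    (p q : ℕ) (hne : p ≠ q) (hpq : p + q ≠ 0)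
    (d : A →ₗ[ℂ] A)
    (hd : ∀ x y : A, ((p + q : ℕ) : ℂ) • d (x * y)
        = ((2 * p : ℕ) : ℂ) • (d x * y) + ((2 * q : ℕ) : ℂ) • (x * d y)) :
    d = 0 := by
  have hPQ : ((p : ℂ) + (q : ℂ)) ≠ 0 := by
    have h : ((p + q : ℕ) : ℂ) ≠ 0 := Nat.cast_ne_zero.mpr hpq
    push_cast at h; exact h
  have hQP : ((q : ℂ) - (p : ℂ)) ≠ 0 := by
    rw [sub_ne_zero]
    exact fun h => hne (Nat.cast_injective h.symm)
  -- (*) : (q - p) • d x = 2q • (x * d E)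
  have star : ∀ x : A, ((q : ℂ) - (p : ℂ)) • d x = (2 * (q : ℂ)) • (x * d E) := by
    intro x
    have h := hd x E
    rw [hE x, hE (d x)] at h
    push_cast at h
    have h2 : (2 * (q : ℂ)) • (x * d E)
        = ((p : ℂ) + (q : ℂ)) • d x - (2 * (p : ℂ)) • d x := by
      rw [h]; module
    rw [h2]; module
  -- E * d E = 0
  have hEdE : E * d E = 0 := by
    have h := star E
    have h' : E * (((q : ℂ) - (p : ℂ)) • d E) = E * ((2 * (q : ℂ)) • (E * d E)) := by
      rw [h]
    rw [mul_smul_comm, mul_smul_comm, ← mul_assoc, hE E] at h'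
    -- h' : (q - p) • (E * d E) = 2q • (E * d E)
    -- star E : (q - p) • d E = 2q • (E * d E)
    -- so (q - p) • (E * d E) = (q-p) • (2q/(q-p)) ... combine:
    have key : (-((p : ℂ) + (q : ℂ))) • (E * d E) = 0 := by
      have := h'
      have : ((q : ℂ) - (p : ℂ)) • (E * d E) - (2 * (q : ℂ)) • (E * d E) = 0 := by
        rw [h']; abel
      calc (-((p : ℂ) + (q : ℂ))) • (E * d E)
          = ((q : ℂ) - (p : ℂ)) • (E * d E) - (2 * (q : ℂ)) • (E * d E) := by module
        _ = 0 := this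
    have hne' : (-((p : ℂ) + (q : ℂ))) ≠ 0 := neg_ne_zero.mpr hPQ
    exact (smul_eq_zero.mp key).resolve_left hne'
  have hdE : d E = 0 := by
    have h := star E
    rw [hEdE, smul_zero] at h
    exact (smul_eq_zero.mp h).resolve_left hQP
  ext x
  have h := star x
  rw [hdE, mul_zero, smul_zero] at h
  simpa using (smul_eq_zero.mp h).resolve_left hQP
end

section
/- In the 2-dimensional ℂ-algebra A generated by a single element a with a² ≠ 0 and a³ = 0 (so A = span{a, a²} with multiplication (αa + βa²)(ηa + δa²) = αη·a²), for any non-zero λ ∈ ℂ and any distinct non-negative integers p, q with p + q ≠ 0, the linear map d defined by d(a) = λ·a, d(a²) = 2λ·a² is a (p,q)-derivation of A, and a is an eigenvector of d with eigenvalue λ whose nilpotency index is exactly 3. -/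
/-- In the two-dimensional ℂ-algebra spanned by `a` and `a²` with `a² ≠ 0` and
`a³ = 0`, the linear map with `d(a) = λ•a`, `d(a²) = 2λ•a²` is a (p,q)-derivation,
`a` is an eigenvector with eigenvalue `λ`, and the nilpotency index of `a`
is exactly `3`. -/
theorem example_pq_derivation_on_nilpotent_algebra
    {A : Type*} [NonUnitalRing A] [Module ℂ A]
    [SMulCommClass ℂ A A] [IsScalarTower ℂ A A]
    (a : A) (ha2 : a * a ≠ 0) (ha3 : a * a * a = 0)
    (hspan : ∀ x : A, ∃ α β : ℂ, x = α • a + β • (a * a))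
    (p q : ℕ) (hne : p ≠ q) (hpq : p + q ≠ 0)
    (lam : ℂ) (hlam : lam ≠ 0)
    (d : A →ₗ[ℂ] A) (hda : d a = lam • a) (hda2 : d (a * a) = (2 * lam) • (a * a)) :
    (∀ x y : A, ((p + q : ℕ) : ℂ) • d (x * y)
        = ((2 * p : ℕ) : ℂ) • (d x * y) + ((2 * q : ℕ) : ℂ) • (x * d y)) ∧
      d a = lam • a ∧ a ≠ 0 ∧ a * a ≠ 0 ∧ a * a * a = 0 := by
  have haa2 : a * (a * a) = 0 := by rw [← mul_assoc]; exact ha3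
  have ha22 : (a * a) * (a * a) = 0 := by rw [mul_assoc, haa2, mul_zero]
  have ha0 : a ≠ 0 := by rintro rfl; exact ha2 (by simp)
  refine ⟨?_, hda, ha0, ha2, ha3⟩
  intro x y
  obtain ⟨α, β, hx⟩ := hspan x
  obtain ⟨η, δ, hy⟩ := hspan y
  subst hx hy
  simp only [add_mul, mul_add, smul_mul_assoc, mul_smul_comm, haa2, ha22, ha3,
    smul_zero, add_zero, zero_add, map_add, map_smul, hda, hda2, smul_smul]
  match_scalars <;> push_cast <;> ring
end

section
/- Let A be an associative ℂ-algebra with a right identity E, let p, q be distinct positive integers, and let D be a (p,q)-Jordan derivation of A. Then E·D(E) = 0; that is, D(E) lies in the left-annihilator-detecting set {x : E·x = 0}. -/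
/-- For a (p,q)-Jordan derivation `D` of an algebra with right identity `E`,
`E * D(E) = 0`. -/
theorem pq_jordan_derivation_right_identity
    {A : Type*} [NonUnitalRing A] [Module ℂ A]
    [SMulCommClass ℂ A A] [IsScalarTower ℂ A A]
    (E : A) (hE : ∀ x : A, x * E = x)
    (p q : ℕ) (hp : 0 < p) (hq : 0 < q) (hne : p ≠ q)
    (D : A →ₗ[ℂ] A)
    (hD : ∀ a : A, ((p + q : ℕ) : ℂ) • D (a * a)
        = ((2 * p : ℕ) : ℂ) • (D a * a) + ((2 * q : ℕ) : ℂ) • (a * D a)) :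
    E * D E = 0 := by
  have h := hD E
  rw [hE E, hE (D E)] at h
  -- h : (p+q) • D E = (2p) • D E + (2q) • (E * D E)
  have h2 : ((q : ℂ) - p) • D E = ((2 * q : ℕ) : ℂ) • (E * D E) := by
    have : (((q : ℂ) - p)) • D E
        = ((p + q : ℕ) : ℂ) • D E - ((2 * p : ℕ) : ℂ) • D E := by
      push_cast
      rw [← sub_smul]; ring_nf
    rw [this, h]; abel
  have h3 := congrArg (fun x => E * x) h2
  simp only [mul_smul_comm, ← mul_assoc, hE E] at h3
  -- h3 : (q - p) • (E * D E) = (2q) • (E * D E)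
  have h4 : (((2 * q : ℕ) : ℂ) - ((q : ℂ) - p)) • (E * D E) = 0 := by
    rw [sub_smul, ← h3, sub_self]
  rw [smul_eq_zero] at h4
  rcases h4 with h4 | h4
  · exfalso
    push_cast at h4
    have : ((q : ℂ) + p) = 0 := by linear_combination h4
    have hq' : ((q : ℂ) + p) ≠ 0 := by
      have h5 : ((q + p : ℕ) : ℂ) ≠ 0 := Nat.cast_ne_zero.mpr (by omega)
      push_cast at h5; exact h5
    exact hq' this
  · exact h4
end

section
/- Let A be an associative ℂ-algebra with a right identity E, and let R = {γ ∈ A : F·γ = 0 for all F ∈ A} be the right annihilator of A. Let p, q be distinct positive integers, and let D be a (p,q)-Jordan derivation of A. Then D(R) ⊆ R; i.e., the right annihilator is invariant under D. -/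
/-- The right annihilator of an algebra with right identity is invariant under any
(p,q)-Jordan derivation. -/
theorem pq_jordan_derivation_right_annihilator_invariant
    {A : Type*} [NonUnitalRing A] [Module ℂ A]
    [SMulCommClass ℂ A A] [IsScalarTower ℂ A A]
    (E : A) (hE : ∀ x : A, x * E = x)
    (p q : ℕ) (hp : 0 < p) (hq : 0 < q) (hne : p ≠ q)
    (D : A →ₗ[ℂ] A)
    (hD : ∀ a : A, ((p + q : ℕ) : ℂ) • D (a * a)
        = ((2 * p : ℕ) : ℂ) • (D a * a) + ((2 * q : ℕ) : ℂ) • (a * D a)) :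
    ∀ γ : A, (∀ x : A, x * γ = 0) → ∀ x : A, x * D γ = 0 := by
  intro γ hγ x
  have hpq : ((p : ℂ) + q) ≠ 0 := by
    have h0 : (p + q : ℕ) ≠ 0 := by omega
    exact_mod_cast h0
  have hEE : E * E = E := hE E
  -- Step 1: γ * D γ = 0
  have hγD : γ * D γ = 0 := by
    have h := hD γ
    rw [hγ γ, map_zero, smul_zero, hγ (D γ), smul_zero, zero_add] at h
    have h2 : ((2 * q : ℕ) : ℂ) ≠ 0 := by
      have h0 : (2 * q : ℕ) ≠ 0 := by omega
      exact_mod_cast h0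
    exact (smul_eq_zero.mp h.symm).resolve_left h2
  -- generic cancellation: (p+q)•Y = 2p•Y + 2q•Y → Y = 0
  have cancel : ∀ Y : A, ((p + q : ℕ) : ℂ) • Y
      = ((2 * p : ℕ) : ℂ) • Y + ((2 * q : ℕ) : ℂ) • Y → Y = 0 := by
    intro Y h
    have h' : (((2 * p : ℕ) : ℂ) + ((2 * q : ℕ) : ℂ) - ((p + q : ℕ) : ℂ)) • Y = 0 := by
      rw [sub_smul, add_smul, ← h, sub_self]
    have hc : (((2 * p : ℕ) : ℂ) + ((2 * q : ℕ) : ℂ) - ((p + q : ℕ) : ℂ)) = (p : ℂ) + q := by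
      push_cast; ring
    rw [hc] at h'
    exact (smul_eq_zero.mp h').resolve_left hpq
  -- Step 2: E * D E = 0
  have hEDE : E * D E = 0 := by
    apply cancel
    have h := hD E
    rw [hEE, hE (D E)] at h
    have h' := congrArg (fun y => E * y) h
    simp only [mul_add, mul_smul_comm, ← mul_assoc, hEE] at h'
    exact h'
  -- Step 3: D E = 0
  have hDE : D E = 0 := by
    have h := hD E
    rw [hEE, hE (D E), hEDE, smul_zero, add_zero] at h
    have h' : (((p + q : ℕ) : ℂ) - ((2 * p : ℕ) : ℂ)) • D E = 0 := by
      rw [sub_smul, h, sub_self]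
    have hc : (((p + q : ℕ) : ℂ) - ((2 * p : ℕ) : ℂ)) = (q : ℂ) - p := by
      push_cast; ring
    rw [hc] at h'
    have hqp : ((q : ℂ) - p) ≠ 0 := by
      intro hcon
      apply hne
      exact_mod_cast (sub_eq_zero.mp hcon).symm
    exact (smul_eq_zero.mp h').resolve_left hqp
  -- Step 4: E * D γ = 0
  have hEDγ : E * D γ = 0 := by
    apply cancel
    have h := hD (E + γ)
    have hsq : (E + γ) * (E + γ) = E + γ := by
      rw [add_mul, mul_add, mul_add, hEE, hγ E, hγ γ, hE γ, add_zero, add_zero]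
    rw [hsq, map_add, hDE, zero_add] at h
    rw [mul_add, hE (D γ), hγ (D γ), add_zero, add_mul, hγD, add_zero] at h
    have h' := congrArg (fun y => E * y) h
    simp only [mul_add, mul_smul_comm, ← mul_assoc, hEE] at h'
    exact h'
  -- Conclusion
  calc x * D γ = (x * E) * D γ := by rw [hE x]
    _ = x * (E * D γ) := by rw [mul_assoc]
    _ = 0 := by rw [hEDγ, mul_zero]
end

section
/- Let A be an associative ℂ-algebra with a right identity E, let p, q be distinct positive integers, and let D be a (p,q)-Jordan derivation of A whose range is contained in the right annihilator ran(A) = {γ : x·γ = 0 for all x ∈ A}. Then D(F) = ((p+q)/(p−q))·D(E·F) for all F ∈ A. -/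
/-- If a (p,q)-Jordan derivation of an algebra with right identity `E` has range in
the right annihilator, then `D(F) = ((p+q)/(p−q))·D(E·F)` for all `F`. -/
theorem pq_jordan_derivation_range_in_annihilator
    {A : Type*} [NonUnitalRing A] [Module ℂ A]
    [SMulCommClass ℂ A A] [IsScalarTower ℂ A A]
    (E : A) (hE : ∀ x : A, x * E = x)
    (p q : ℕ) (hp : 0 < p) (hq : 0 < q) (hne : p ≠ q)
    (D : A →ₗ[ℂ] A)
    (hD : ∀ a : A, ((p + q : ℕ) : ℂ) • D (a * a)
        = ((2 * p : ℕ) : ℂ) • (D a * a) + ((2 * q : ℕ) : ℂ) • (a * D a))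
    (hran : ∀ a x : A, x * D a = 0) :
    ∀ F : A, D F = (((p : ℂ) + q) / ((p : ℂ) - q)) • D (E * F) := by
  intro F
  have hsub : ((p : ℂ) - q) ≠ 0 := sub_ne_zero.mpr (by exact_mod_cast hne)
  -- D E = 0
  have hDE : D E = 0 := by
    have h := hD E
    rw [hE E, hE (D E), hran E E] at h
    push_cast at h
    have h2 : (((p : ℂ) + q) - 2 * p) • D E = 0 := by
      rw [sub_smul, h, smul_zero, add_zero, sub_self]
    have h3 : ((p : ℂ) + q) - 2 * p ≠ 0 := by
      intro h0
      apply hsub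
      linear_combination -h0
    exact (smul_eq_zero.mp h2).resolve_left h3
  have h1 := hD (E + F)
  have h3 := hD F
  rw [hran F F, smul_zero, add_zero] at h3
  rw [hran (E + F) (E + F), smul_zero, add_zero, add_mul, mul_add, mul_add,
    hE E, hE F, map_add D, map_add, map_add, map_add, hDE, zero_add, add_mul,
    zero_mul, zero_add, mul_add, hE (D F)] at h1
  -- h1 : (p+q) • (D(E*F) + (D F + D(F*F))) = 2p • (D F + D F * F)
  have key : ((p : ℂ) - q) • D F = ((p : ℂ) + q) • D (E * F) := by
    push_cast at h1 h3
    rw [smul_add, smul_add, smul_add, h3] at h1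
    -- now derive
    have := h1
    -- (p+q)•D(EF) + (p+q)•D F + 2p•(DF*F) = 2p•D F + 2p•(DF*F)
    have h4 : ((p : ℂ) + q) • D (E * F) + ((p : ℂ) + q) • D F = (2 * p : ℂ) • D F := by
      have := add_right_cancel (a := ((p:ℂ)+q) • D (E*F) + ((p:ℂ)+q) • D F)
        (b := (2*(p:ℂ)) • (D F * F)) (c := (2*(p:ℂ)) • D F)
      apply this
      rw [add_assoc]
      exact h1
    have : ((2 * p : ℂ) - ((p:ℂ) + q)) • D F = ((p : ℂ) + q) • D (E * F) := by
      rw [sub_smul, ← h4]; abel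
    rw [← this]
    congr 1
    ring
  rw [div_eq_inv_mul, mul_smul, ← key, inv_smul_smul₀ hsub]
end

section
/- Let R be a semiprime ring that is 2-torsion free, let p, q be non-negative integers with p + q ≠ 0 and p ≠ q, and let d : R → R be an additive map satisfying (p+q)·d(xy) = 2p·d(x)·y + 2q·x·d(y) for all x, y ∈ R. If additionally (p+q) and 2pq-related torsion hypotheses hold (R is m-torsion free for all m ≤ max(p,q)+1), then d = 0. -/
/-- Vukman–Kosi-Ulbl: a (p,q)-derivation of a semiprime ring with suitable torsion
freeness vanishes. -/
theorem pq_derivation_semiprime_eq_zero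
    {R : Type*} [Ring R]
    (p q : ℕ) (hne : p ≠ q) (hpq : p + q ≠ 0)
    (hsemiprime : ∀ x : R, (∀ r : R, x * r * x = 0) → x = 0)
    (htf : ∀ m : ℕ, m ≠ 0 → m ≤ max p q + 1 → ∀ x : R, m • x = 0 → x = 0)
    (h2 : ∀ x : R, 2 • x = 0 → x = 0)
    (hpqtf : ∀ x : R, (p + q) • x = 0 → x = 0)
    (d : R →+ R)
    (hd : ∀ x y : R, (p + q) • d (x * y)
        = (2 * p) • (d x * y) + (2 * q) • (x * d y)) :
    d = 0 := by
  -- convert nat-smul facts to int-smul facts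
  have habs : ∀ (m : ℤ) (x : R), m • x = 0 → m.natAbs • x = 0 := by
    intro m x h
    rcases Int.natAbs_eq m with e | e
    · rw [← Nat.cast_smul_eq_nsmul ℤ, ← e, h]
    · rw [← Nat.cast_smul_eq_nsmul ℤ]
      rw [e, neg_smul, neg_eq_zero] at h
      exact h
  have hZtf : ∀ n : ℕ, n ≠ 0 → n ≤ max p q + 1 → ∀ v : R, (n : ℤ) • v = 0 → v = 0 := by
    intro n hn hle v h
    rw [Nat.cast_smul_eq_nsmul] at h
    exact htf n hn hle v h
  have hpqZ : ∀ v : R, ((p : ℤ) + q) • v = 0 → v = 0 := by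
    intro v h
    apply hpqtf
    have h' : (((p + q : ℕ)) : ℤ) • v = 0 := by push_cast; exact h
    rwa [Nat.cast_smul_eq_nsmul] at h'
  have hdZ : ∀ x y : R, ((p : ℤ) + (q : ℤ)) • d (x * y)
      = ((2 : ℤ) * p) • (d x * y) + ((2 : ℤ) * q) • (x * d y) := by
    intro x y
    have h := hd x y
    rw [← Nat.cast_smul_eq_nsmul ℤ (p + q), ← Nat.cast_smul_eq_nsmul ℤ (2 * p),
      ← Nat.cast_smul_eq_nsmul ℤ (2 * q)] at h
    push_cast at h ⊢
    exact h
  -- the key "star" identity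
  have hstar : ∀ x y z : R,
      (p : ℤ) • (d x * (y * z)) + (q : ℤ) • (x * (y * d z)) = 0 := by
    intro x y z
    have g1 := hdZ (x * y) z
    have g2 := congrArg (fun t => t * z) (hdZ x y)
    have g3 := hdZ x (y * z)
    have g4 := congrArg (fun t => x * t) (hdZ y z)
    simp only [mul_assoc] at g1
    simp only [add_mul, smul_mul_assoc, mul_assoc] at g2
    simp only [mul_add, mul_smul_comm, mul_assoc] at g4
    have hk : (2 * ((p : ℤ) - q)) •
        ((p : ℤ) • (d x * (y * z)) + (q : ℤ) • (x * (y * d z))) = 0 := by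
      linear_combination (norm := module)
        (-((p : ℤ) + q)) • g1 - (2 * (p : ℤ)) • g2 + ((p : ℤ) + q) • g3 + (2 * (q : ℤ)) • g4
    rw [mul_smul] at hk
    rw [show ((2 : ℤ)) = ((2 : ℕ) : ℤ) by norm_num, Nat.cast_smul_eq_nsmul] at hk
    have hk2 := h2 _ hk
    have hk3 := habs _ _ hk2
    exact htf _ (by omega) (by omega) _ hk3
  -- main case split
  ext z0
  show d z0 = 0
  rcases Nat.eq_zero_or_pos p with hp0 | hppos
  · -- p = 0, q ≠ 0 : star gives x*(y*dz) = 0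
    have hq0 : q ≠ 0 := by omega
    have hv : ∀ x y z : R, x * (y * d z) = 0 := by
      intro x y z
      have h := hstar x y z
      rw [hp0] at h
      simp only [Nat.cast_zero, zero_smul, zero_add] at h
      have := habs _ _ h
      simpa using htf q hq0 (by omega) _ (by simpa using this)
    apply hsemiprime
    intro r
    have := hv (d z0) r z0
    rw [← mul_assoc] at this
    exact this
  rcases Nat.eq_zero_or_pos q with hq0 | hqpos
  · -- q = 0, p ≠ 0 : star gives dx*(y*z) = 0
    have hv : ∀ x y z : R, d x * (y * z) = 0 := by
      intro x y z
      have h := hstar x y z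
      rw [hq0] at h
      simp only [Nat.cast_zero, zero_smul, add_zero] at h
      have := habs _ _ h
      simpa using htf p (by omega) (by omega) _ (by simpa using this)
    apply hsemiprime
    intro r
    have := hv z0 r (d z0)
    rw [← mul_assoc] at this
    exact this
  -- main case: p, q ≥ 1
  -- Step 1: x*(y*(x*(s*dx))) = 0
  have hv : ∀ x y s : R, x * (y * (x * (s * d x))) = 0 := by
    intro x y s
    have e1 := hstar x (y * (x * s)) x
    have e2 := congrArg (fun t => t * (s * x)) (hstar x y x)
    have e3 := congrArg (fun t => x * (y * t)) (hstar x s x)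
    simp only [mul_assoc] at e1
    simp only [add_mul, smul_mul_assoc, zero_mul, mul_assoc] at e2
    simp only [mul_add, mul_smul_comm, mul_zero, mul_assoc] at e3
    have hk : ((q : ℤ) * ((p : ℤ) + q)) • (x * (y * (x * (s * d x)))) = 0 := by
      linear_combination (norm := module)
        (p : ℤ) • e1 - (p : ℤ) • e2 + (q : ℤ) • e3
    rw [mul_smul] at hk
    have hk2 : ((p : ℤ) + q) • (x * (y * (x * (s * d x)))) = 0 := by
      have h1 := habs _ _ hk
      rw [Int.natAbs_natCast] at h1
      exact htf q (by omega) (by omega) _ h1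
    exact hpqZ _ hk2
  -- Step 2: x*(s*dx) = 0
  have hxsd : ∀ x s : R, x * (s * d x) = 0 := by
    intro x s
    apply hsemiprime
    intro r
    have h := hv x (s * (d x * r)) s
    simp only [mul_assoc] at h ⊢
    exact h
  -- Step 3: dx*(y*x) = 0
  have hdyx : ∀ x y : R, d x * (y * x) = 0 := by
    intro x y
    have h := hstar x y x
    rw [hxsd x y, smul_zero, add_zero] at h
    have := habs _ _ h
    simpa using htf p (by omega) (by omega) _ (by simpa using this)
  -- Step 4: x*(s*dz) = 0 for all x s z
  have hxz : ∀ x s z : R, x * (s * d z) = 0 := by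
    intro x s z
    have hlin : x * (s * d z) = -(z * (s * d x)) := by
      have h := hxsd (x + z) s
      rw [map_add] at h
      simp only [add_mul, mul_add] at h
      rw [hxsd x s] at h
      rw [hxsd z s] at h
      rw [zero_add, add_zero] at h
      exact eq_neg_of_add_eq_zero_right h
    apply hsemiprime
    intro r
    have h0 : d z * (r * (z * (s * d x))) = 0 := by
      have := congrArg (fun t => t * (s * d x)) (hdyx z r)
      simpa [mul_assoc] using this
    nth_rewrite 2 [hlin]
    simp only [mul_neg, neg_eq_zero, mul_assoc]
    simp only [h0, mul_zero]
  -- conclude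
  apply hsemiprime
  intro r
  have := hxz (d z0) r z0
  rw [← mul_assoc] at this
  exact this
end
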